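/- Let μ, μ' ∈ P_r and w, w' ∈ S_r. If rμ − δ + w•δ ∈ rQ_r and rμ' − δ + w'•δ ∈ rQ_r, then r(μ + w•μ') − δ + (w∘w')•δ ∈ rQ_r. -/

import Mathlib

open Finset

noncomputable section

/-- Inner product `⟨u,v⟩ = Σ_i u i * v i` on `ℚ^r`. -/
def ip {r : ℕ} (u v : Fin r → ℚ) : ℚ := ∑ i, u i * v i

/-- Action of `S_r` permuting coordinates: `(w • v) i = v (w⁻¹ i)`. -/
def pact {r : ℕ} (w : Equiv.Perm (Fin r)) (v : Fin r → ℚ) : Fin r → ℚ := fun i => v (w⁻¹ i)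

/-- The Weyl vector `δ`, whose (1-indexed) `i`-th coordinate is `(r+1-2i)/2`. -/
def weylδ (r : ℕ) : Fin r → ℚ := fun j => ((r : ℚ) - 1 - 2 * ((j : ℕ) : ℚ)) / 2

/-- Membership in `V = {v : Fin r → ℚ | Σ_i v i = 0}`. -/
def memV {r : ℕ} (v : Fin r → ℚ) : Prop := ∑ i, v i = 0

/-- Membership in the root lattice `Q_r`. -/
def memQ {r : ℕ} (v : Fin r → ℚ) : Prop := memV v ∧ ∀ i, ∃ m : ℤ, v i = (m : ℚ)

/-- Membership in the weight lattice `P_r`. -/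
def memP {r : ℕ} (v : Fin r → ℚ) : Prop := memV v ∧ ∀ i j, ∃ m : ℤ, v i - v j = (m : ℚ)

/-- The first fundamental weight `Λ₁ = ε₁ - (1/r)(ε₁ + ⋯ + ε_r)`. -/
def Lam1 (r : ℕ) : Fin r → ℚ := fun j => (if (j : ℕ) = 0 then 1 else 0) - 1 / (r : ℚ)

/-- The simple roots, 0-indexed: `srootF i = ε_{i+1} - ε_{i+2}` in 1-indexed notation. -/
def srootF {r : ℕ} (i : Fin (r - 1)) : Fin r → ℚ :=
  fun j => (if (j : ℕ) = (i : ℕ) then 1 else 0) - (if (j : ℕ) = (i : ℕ) + 1 then 1 else 0)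

/-- The highest root `θ = ε₁ - ε_r`. -/
def hroot (r : ℕ) : Fin r → ℚ :=
  fun j => (if (j : ℕ) = 0 then 1 else 0) - (if (j : ℕ) = r - 1 then 1 else 0)

/-- The set `Π_{r,n}` of weights of `L_r(nΛ₁)`:
all `nΛ₁ - a₁α₁ - ⋯ - a_{r-1}α_{r-1}` with `n ≥ a₁ ≥ ⋯ ≥ a_{r-1} ≥ 0`. -/
def PiWts (r n : ℕ) : Set (Fin r → ℚ) :=
  {v | ∃ a : Fin (r - 1) → ℤ, (∀ i, 0 ≤ a i) ∧ (∀ i, a i ≤ (n : ℤ)) ∧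
        (∀ i j, i ≤ j → a j ≤ a i) ∧
        v = (n : ℚ) • Lam1 r - ∑ i, (a i : ℚ) • srootF i}

/-! Since `S_r` acts linearly and `(w w')•δ = w•(w'•δ)`, the vector in question is
`(rμ - δ + w•δ) + w•(rμ' - δ + w'•δ) = rλ + w•(rλ') = r(λ + w•λ')`, and `λ + w•λ' ∈ Q_r`
because `Q_r` is an `S_r`-stable subgroup. -/

section PermAction

variable {r : ℕ}

theorem pact_mul (w w' : Equiv.Perm (Fin r)) (v : Fin r → ℚ) :
    pact (w * w') v = pact w (pact w' v) := by
  funext i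
  simp only [pact, mul_inv_rev, Equiv.Perm.mul_apply]

theorem pact_add (w : Equiv.Perm (Fin r)) (u v : Fin r → ℚ) :
    pact w (u + v) = pact w u + pact w v := rfl

theorem pact_sub (w : Equiv.Perm (Fin r)) (u v : Fin r → ℚ) :
    pact w (u - v) = pact w u - pact w v := rfl

theorem pact_smul (w : Equiv.Perm (Fin r)) (c : ℚ) (v : Fin r → ℚ) :
    pact w (c • v) = c • pact w v := rfl

theorem memQ_add {u v : Fin r → ℚ} (hu : memQ u) (hv : memQ v) : memQ (u + v) := by
  refine ⟨by rw [memV, Pi.add_def, Finset.sum_add_distrib, hu.1, hv.1, add_zero], fun i => ?_⟩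
  obtain ⟨m, hm⟩ := hu.2 i
  obtain ⟨n, hn⟩ := hv.2 i
  exact ⟨m + n, by rw [Pi.add_apply, hm, hn, Int.cast_add]⟩

theorem memQ_pact (w : Equiv.Perm (Fin r)) {v : Fin r → ℚ} (hv : memQ v) :
    memQ (pact w v) :=
  ⟨(Equiv.sum_comp w⁻¹ v).trans hv.1, fun i => hv.2 (w⁻¹ i)⟩

end PermAction

theorem stmt7_general (r : ℕ) (μ μ' : Fin r → ℚ)
    (w w' : Equiv.Perm (Fin r))
    (h1 : ∃ lam, memQ lam ∧ (r : ℚ) • μ - weylδ r + pact w (weylδ r) = (r : ℚ) • lam)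
    (h2 : ∃ lam, memQ lam ∧ (r : ℚ) • μ' - weylδ r + pact w' (weylδ r) = (r : ℚ) • lam) :
    ∃ lam, memQ lam ∧
      (r : ℚ) • (μ + pact w μ') - weylδ r + pact (w * w') (weylδ r) = (r : ℚ) • lam := by
  obtain ⟨lam, hlam, hμ⟩ := h1
  obtain ⟨lam', hlam', hμ'⟩ := h2
  refine ⟨lam + pact w lam', memQ_add hlam (memQ_pact w hlam'), ?_⟩
  calc (r : ℚ) • (μ + pact w μ') - weylδ r + pact (w * w') (weylδ r)
      = ((r : ℚ) • μ - weylδ r + pact w (weylδ r))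
          + pact w ((r : ℚ) • μ' - weylδ r + pact w' (weylδ r)) := by
        rw [pact_mul, pact_add, pact_sub, pact_smul, smul_add]
        abel
    _ = (r : ℚ) • (lam + pact w lam') := by
        rw [hμ, hμ', pact_smul, smul_add]

/-- if `rμ - δ + w•δ ∈ rQ_r` and `rμ' - δ + w'•δ ∈ rQ_r`, then
`r(μ + w•μ') - δ + (w∘w')•δ ∈ rQ_r`. -/
theorem stmt7 (r : ℕ) (hr : 2 ≤ r) (μ μ' : Fin r → ℚ) (hμ : memP μ) (hμ' : memP μ')
    (w w' : Equiv.Perm (Fin r))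
    (h1 : ∃ lam, memQ lam ∧ (r : ℚ) • μ - weylδ r + pact w (weylδ r) = (r : ℚ) • lam)
    (h2 : ∃ lam, memQ lam ∧ (r : ℚ) • μ' - weylδ r + pact w' (weylδ r) = (r : ℚ) • lam) :
    ∃ lam, memQ lam ∧
      (r : ℚ) • (μ + pact w μ') - weylδ r + pact (w * w') (weylδ r) = (r : ℚ) • lam :=
  stmt7_general r μ μ' w w' h1 h2
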